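/- The extension-by-zero map ι : Div(G) → Div(G^•) induces an injective homomorphism on Picard groups: for any two divisors d, d' on a connected weighted graph G (possibly with loops), d is linearly equivalent to d' on G if and only if ι(d) is linearly equivalent to ι(d') on the associated weightless loopless graph G^•. -/

import Mathlib

open Finset

section Preliminaries

variable {V : Type} [Fintype V] [DecidableEq V]

/-- The degree of a divisor on a graph with vertex set `V`. -/
def degDiv (d : V → ℤ) : ℤ := ∑ v, d v

/-- A divisor is effective if it is nonnegative at every vertex. -/
def Effective (d : V → ℤ) : Prop := ∀ v, 0 ≤ d v

/-- The principal divisor `t_Z` associated to a subset `Z` of vertices, for the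
graph with edge multiplicity function `m`. -/
def tZ (m : V → V → ℕ) (Z : Finset V) : V → ℤ := fun v =>
  if v ∈ Z then -(∑ u ∈ Zᶜ, (m v u : ℤ)) else ∑ u ∈ Z, (m v u : ℤ)

/-- Two divisors are linearly equivalent if their difference lies in the subgroup
generated by the divisors `t_Z`. -/
def LinEquiv (m : V → V → ℕ) (d d' : V → ℤ) : Prop :=
  d - d' ∈ AddSubgroup.closure (Set.range (tZ m))

/-- The simple graph associated to an edge multiplicity function `m`
(an edge between distinct `u`, `v` whenever `m u v > 0`; loops are discarded). -/
def assocGraph (m : V → V → ℕ) : SimpleGraph V where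
  Adj u v := u ≠ v ∧ (0 < m u v ∨ 0 < m v u)
  symm := ⟨fun _ _ h => ⟨h.1.symm, h.2.symm⟩⟩
  loopless := ⟨fun _ h => h.1 rfl⟩

end Preliminaries

section Rank

variable {V : Type} [Fintype V] [DecidableEq V]

/-- The set of integers `k` such that either `k = -1`, or `k ≥ 0` and for every
effective divisor `e` of degree `k`, the divisor `d - e` is linearly equivalent
to an effective divisor. -/
def bnRankSet (m : V → V → ℕ) (d : V → ℤ) : Set ℤ :=
  {k : ℤ | k = -1 ∨ (0 ≤ k ∧ ∀ e : V → ℤ, Effective e → degDiv e = k →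
      ∃ f : V → ℤ, Effective f ∧ LinEquiv m (d - e) f)}

/-- The Baker–Norine rank of a divisor `d` on the weightless loopless multigraph
with edge multiplicity function `m`. -/
noncomputable def bnRank (m : V → V → ℕ) (d : V → ℤ) : ℤ := sSup (bnRankSet m d)

end Rank

section Bullet

variable {V : Type} [Fintype V] [DecidableEq V]

/-- The vertex set of the associated weightless loopless graph `G^•`:
the original vertices together with `ω v + m v v` new vertices for each `v`. -/
abbrev BV (ω : V → ℕ) (m : V → V → ℕ) : Type := V ⊕ (Σ v : V, Fin (ω v + m v v))

/-- The edge multiplicity function of the associated weightless loopless graph `G^•`. -/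
def bulletM (ω : V → ℕ) (m : V → V → ℕ) : BV ω m → BV ω m → ℕ
  | Sum.inl u, Sum.inl v => if u = v then 0 else m u v
  | Sum.inl u, Sum.inr ⟨v, _⟩ => if u = v then 2 else 0
  | Sum.inr ⟨u, _⟩, Sum.inl v => if u = v then 2 else 0
  | Sum.inr _, Sum.inr _ => 0

/-- The extension-by-zero of a divisor on `G` to a divisor on `G^•`. -/
def iota (ω : V → ℕ) (m : V → V → ℕ) (d : V → ℤ) : BV ω m → ℤ
  | Sum.inl v => d v
  | Sum.inr _ => 0

/-- The rank of a divisor on a weighted graph with loops, defined as the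
Baker–Norine rank of its extension by zero to `G^•`. -/
noncomputable def wRank (ω : V → ℕ) (m : V → V → ℕ) (d : V → ℤ) : ℤ :=
  bnRank (bulletM ω m) (iota ω m d)

end Bullet

/-!
Linear equivalence is equality modulo the image of the Laplacian
`x ↦ (v ↦ ∑ᵤ m(v,u) (x u - x v))`, which does not see loops. In `G^•` every new vertex `(v, i)`
is a leaf joined to `v` alone. Extending a potential on `G` constantly along the leaves gives a
potential on `G^•` whose Laplacian is `ι` of the original one. Conversely, a potential on `G^•`
whose Laplacian vanishes at every leaf is constant along each leaf, so its restriction to `V`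
has the same Laplacian on `G`.
-/

section Laplacian

variable {V : Type} [Fintype V]

def laplacian (m : V → V → ℕ) : (V → ℤ) →+ (V → ℤ) where
  toFun x v := ∑ u, (m v u : ℤ) * (x u - x v)
  map_zero' := by ext; simp
  map_add' x y := by ext; simp [mul_add, mul_sub, sum_add_distrib]; ring

lemma laplacian_apply (m : V → V → ℕ) (x : V → ℤ) (v : V) :
    laplacian m x v = ∑ u, (m v u : ℤ) * (x u - x v) := rfl

variable [DecidableEq V]

lemma laplacian_indicator (m : V → V → ℕ) (Z : Finset V) :
    laplacian m (fun v => if v ∈ Z then 1 else 0) = tZ m Z := by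
  ext v
  rw [laplacian_apply, tZ]
  by_cases hv : v ∈ Z
  · simp only [hv, if_true]
    rw [← sum_add_sum_compl Z, ← sum_neg_distrib, sum_eq_zero fun u hu => by simp [hu], zero_add]
    exact sum_congr rfl fun u hu => by simp [mem_compl.1 hu]
  · simp [hv, mul_ite, sum_ite_mem]

lemma closure_range_tZ_eq_range_laplacian (m : V → V → ℕ) :
    AddSubgroup.closure (Set.range (tZ m)) = (laplacian m).range := by
  refine le_antisymm ?_ ?_
  · rw [AddSubgroup.closure_le]
    rintro _ ⟨Z, rfl⟩
    exact ⟨_, laplacian_indicator m Z⟩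
  · rintro _ ⟨x, rfl⟩
    rw [← AddMonoidHom.coe_toIntLinearMap, LinearMap.pi_apply_eq_sum_univ]
    refine AddSubgroup.sum_mem _ fun z _ => AddSubgroup.zsmul_mem _ ?_ _
    refine AddSubgroup.subset_closure ⟨{z}, ?_⟩
    simp_rw [AddMonoidHom.coe_toIntLinearMap, ← laplacian_indicator, mem_singleton, eq_comm]

lemma linEquiv_iff_exists_laplacian (m : V → V → ℕ) (d d' : V → ℤ) :
    LinEquiv m d d' ↔ ∃ x, laplacian m x = d - d' := by
  rw [LinEquiv, closure_range_tZ_eq_range_laplacian, AddMonoidHom.mem_range]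

end Laplacian

section BulletLaplacian

variable {V : Type} (ω : V → ℕ) (m : V → V → ℕ)

lemma iota_sub (d d' : V → ℤ) : iota ω m (d - d') = iota ω m d - iota ω m d' := by
  ext (v | p) <;> simp [iota]

variable [Fintype V] [DecidableEq V]

lemma laplacian_bulletM_inl (y : BV ω m → ℤ) (v : V) :
    laplacian (bulletM ω m) y (Sum.inl v) =
      laplacian m (y ∘ Sum.inl) v + 2 * ∑ i, (y (Sum.inr ⟨v, i⟩) - y (Sum.inl v)) := by
  rw [laplacian_apply, laplacian_apply, Fintype.sum_sum_type, Fintype.sum_sigma]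
  congr 1
  · exact sum_congr rfl fun u _ => by by_cases h : v = u <;> simp [bulletM, h]
  · simp [bulletM, ← mul_sum]

lemma laplacian_bulletM_inr (y : BV ω m → ℤ) (v : V) (i : Fin (ω v + m v v)) :
    laplacian (bulletM ω m) y (Sum.inr ⟨v, i⟩) = 2 * (y (Sum.inl v) - y (Sum.inr ⟨v, i⟩)) := by
  simp [laplacian_apply, Fintype.sum_sum_type, bulletM]

lemma laplacian_bulletM_extend (x : V → ℤ) :
    laplacian (bulletM ω m) (Sum.elim x fun p => x p.1) = iota ω m (laplacian m x) := by
  ext (v | ⟨v, i⟩)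
  · simp [laplacian_bulletM_inl, iota, Function.comp_def]
  · simp [laplacian_bulletM_inr, iota]

lemma laplacian_eq_of_laplacian_bulletM_eq_iota {y : BV ω m → ℤ} {e : V → ℤ}
    (hy : laplacian (bulletM ω m) y = iota ω m e) : laplacian m (y ∘ Sum.inl) = e := by
  have hleaf : ∀ v i, y (Sum.inr ⟨v, i⟩) = y (Sum.inl v) := fun v i => by
    have h := congrFun hy (Sum.inr ⟨v, i⟩)
    rw [laplacian_bulletM_inr] at h
    simp only [iota] at h
    omega
  ext v
  simpa [laplacian_bulletM_inl, hleaf, iota] using congrFun hy (Sum.inl v)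

end BulletLaplacian

theorem linEquiv_iff_iota_linEquiv_general {V : Type} [Fintype V] [DecidableEq V]
    (ω : V → ℕ) (m : V → V → ℕ)
    (d d' : V → ℤ) :
    LinEquiv m d d' ↔ LinEquiv (bulletM ω m) (iota ω m d) (iota ω m d') := by
  rw [linEquiv_iff_exists_laplacian, linEquiv_iff_exists_laplacian, ← iota_sub]
  constructor
  · rintro ⟨x, hx⟩
    exact ⟨_, hx ▸ laplacian_bulletM_extend ω m x⟩
  · rintro ⟨y, hy⟩
    exact ⟨_, laplacian_eq_of_laplacian_bulletM_eq_iota ω m hy⟩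

/-- The extension-by-zero map induces an injective homomorphism on Picard
groups: `d ~ d'` on `G` iff `ι(d) ~ ι(d')` on `G^•`. -/
theorem linEquiv_iff_iota_linEquiv {V : Type} [Fintype V] [DecidableEq V]
    (ω : V → ℕ) (m : V → V → ℕ) (hsymm : ∀ u v, m u v = m v u)
    (hconn : (assocGraph m).Connected)
    (d d' : V → ℤ) :
    LinEquiv m d d' ↔ LinEquiv (bulletM ω m) (iota ω m d) (iota ω m d') :=
  linEquiv_iff_iota_linEquiv_general ω m d d'
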